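/- arXiv:2605.01269 — 6 statements merged into one kernel-verified Lean document; each statement's English description precedes it below -/
import Mathlib

section
/- Let k ≥ 2 and n ≥ k+1 be integers. If D is a Dₖ-saturated digraph on n vertices, then the vertex-strong connectivity of D equals k−1. -/
/-- A finite strict digraph: a finite vertex set and a finite set of arcs
(ordered pairs), with no loops, and all arc endpoints in the vertex set. -/
structure Dgraph where
  verts : Finset ℕ
  arcs : Finset (ℕ × ℕ)
  arcs_mem : ∀ e ∈ arcs, e.1 ∈ verts ∧ e.2 ∈ verts
  no_loops : ∀ e ∈ arcs, e.1 ≠ e.2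

namespace Dgraph

/-- `H` is a subdigraph of `D`. -/
def IsSubdigraph (H D : Dgraph) : Prop := H.verts ⊆ D.verts ∧ H.arcs ⊆ D.arcs

/-- Reachability by a directed path. -/
def Reach (D : Dgraph) (u v : ℕ) : Prop :=
  Relation.ReflTransGen (fun a b => (a, b) ∈ D.arcs) u v

/-- `D` is strongly connected. -/
def StronglyConnected (D : Dgraph) : Prop :=
  ∀ u ∈ D.verts, ∀ v ∈ D.verts, D.Reach u v

/-- Deletion of a set of vertices. -/
def delete (D : Dgraph) (S : Finset ℕ) : Dgraph where
  verts := D.verts \ S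
  arcs := D.arcs.filter (fun e => e.1 ∉ S ∧ e.2 ∉ S)
  arcs_mem := by
    intro e he
    simp only [Finset.mem_filter] at he
    have h := D.arcs_mem e he.1
    simp only [Finset.mem_sdiff]
    exact ⟨⟨h.1, he.2.1⟩, ⟨h.2, he.2.2⟩⟩
  no_loops := fun e he => D.no_loops e (Finset.mem_filter.mp he).1

/-- The subdigraph induced by a set of vertices. -/
def induce (D : Dgraph) (S : Finset ℕ) : Dgraph where
  verts := D.verts ∩ S
  arcs := D.arcs.filter (fun e => e.1 ∈ S ∧ e.2 ∈ S)
  arcs_mem := by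
    intro e he
    simp only [Finset.mem_filter] at he
    have h := D.arcs_mem e he.1
    simp only [Finset.mem_inter]
    exact ⟨⟨h.1, he.2.1⟩, ⟨h.2, he.2.2⟩⟩
  no_loops := fun e he => D.no_loops e (Finset.mem_filter.mp he).1

/-- The complete digraph on a vertex set `S`. -/
def completeOn (S : Finset ℕ) : Dgraph where
  verts := S
  arcs := (S ×ˢ S).filter (fun e => e.1 ≠ e.2)
  arcs_mem := by
    intro e he
    simp only [Finset.mem_filter, Finset.mem_product] at he
    exact ⟨he.1.1, he.1.2⟩
  no_loops := fun e he => (Finset.mem_filter.mp he).2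

/-- Adding the arc `(u, v)` (when this is a legal new arc). -/
def addArc (D : Dgraph) (u v : ℕ) : Dgraph where
  verts := D.verts
  arcs := if u ∈ D.verts ∧ v ∈ D.verts ∧ u ≠ v then insert (u, v) D.arcs else D.arcs
  arcs_mem := by
    intro e he
    split at he
    · rcases Finset.mem_insert.mp he with h | h
      · subst h; exact ⟨by tauto, by tauto⟩
      · exact D.arcs_mem e h
    · exact D.arcs_mem e he
  no_loops := by
    intro e he
    split at he
    · rcases Finset.mem_insert.mp he with h | h
      · subst h; tauto
      · exact D.no_loops e h
    · exact D.no_loops e he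

/-- `D` is `k`-strongly connected: it has at least `k+1` vertices and removing
any fewer than `k` vertices leaves a strongly connected digraph. -/
def KStrong (D : Dgraph) (k : ℕ) : Prop :=
  k + 1 ≤ D.verts.card ∧
    ∀ S : Finset ℕ, S.card < k → StronglyConnected (D.delete S)

/-- `(u, v)` is an arc of the complement of `D`. -/
def MissingArc (D : Dgraph) (u v : ℕ) : Prop :=
  u ∈ D.verts ∧ v ∈ D.verts ∧ u ≠ v ∧ (u, v) ∉ D.arcs

/-- `D` is `𝒟ₖ`-saturated: it has no `k`-strongly connected subdigraph, but
adding any missing arc creates one. -/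
def DSaturated (D : Dgraph) (k : ℕ) : Prop :=
  (∀ H : Dgraph, H.IsSubdigraph D → ¬ H.KStrong k) ∧
    ∀ u v : ℕ, D.MissingArc u v →
      ∃ H : Dgraph, H.IsSubdigraph (D.addArc u v) ∧ H.KStrong k

/-- `S` is a separator of `D`. -/
def IsSeparator (D : Dgraph) (S : Finset ℕ) : Prop :=
  S ⊆ D.verts ∧
    (¬ StronglyConnected (D.delete S) ∨ (D.delete S).verts.card ≤ 1)

/-- `S` is a minimum separator of `D`. -/
def IsMinSeparator (D : Dgraph) (S : Finset ℕ) : Prop :=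
  D.IsSeparator S ∧ ∀ T : Finset ℕ, D.IsSeparator T → S.card ≤ T.card

/-- `B` is the vertex set of a strong component of `D`: a maximal set of
vertices inducing a strongly connected subdigraph. -/
def IsStrongComponent (D : Dgraph) (B : Finset ℕ) : Prop :=
  B ⊆ D.verts ∧ B.Nonempty ∧ StronglyConnected (D.induce B) ∧
    ∀ B' : Finset ℕ, B ⊆ B' → B' ⊆ D.verts →
      StronglyConnected (D.induce B') → B' = B

/-- The reciprocal-degree of `v` in `D`. -/
def recipDeg (D : Dgraph) (v : ℕ) : ℕ :=
  (D.verts.filter (fun w => (v, w) ∈ D.arcs ∧ (w, v) ∈ D.arcs)).card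

/-- Extend `D` by a new vertex `v`: bidirectional arcs to every vertex of `K`,
and unidirectional arcs (all out of `v` if `out`, else all into `v`) to every
other vertex of `D`. -/
def extend (D : Dgraph) (v : ℕ) (K : Finset ℕ) (out : Bool) : Dgraph where
  verts := insert v D.verts
  arcs := D.arcs
    ∪ ((K ∩ D.verts).filter (· ≠ v)).image (fun w => (w, v))
    ∪ ((K ∩ D.verts).filter (· ≠ v)).image (fun w => (v, w))
    ∪ (if out then ((D.verts \ K).filter (· ≠ v)).image (fun w => (v, w))
        else ((D.verts \ K).filter (· ≠ v)).image (fun w => (w, v)))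
  arcs_mem := by
    intro e he
    rcases Finset.mem_union.mp he with h | h
    · rcases Finset.mem_union.mp h with h | h
      · rcases Finset.mem_union.mp h with h | h
        · have h2 := D.arcs_mem e h
          exact ⟨Finset.mem_insert_of_mem h2.1, Finset.mem_insert_of_mem h2.2⟩
        · obtain ⟨w, hw, rfl⟩ := Finset.mem_image.mp h
          have hwD := (Finset.mem_inter.mp (Finset.mem_filter.mp hw).1).2
          exact ⟨Finset.mem_insert_of_mem hwD, Finset.mem_insert_self _ _⟩
      · obtain ⟨w, hw, rfl⟩ := Finset.mem_image.mp h
        have hwD := (Finset.mem_inter.mp (Finset.mem_filter.mp hw).1).2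
        exact ⟨Finset.mem_insert_self _ _, Finset.mem_insert_of_mem hwD⟩
    · cases out with
      | true =>
        simp only [if_true] at h
        obtain ⟨w, hw, rfl⟩ := Finset.mem_image.mp h
        have hwD := (Finset.mem_sdiff.mp (Finset.mem_filter.mp hw).1).1
        exact ⟨Finset.mem_insert_self _ _, Finset.mem_insert_of_mem hwD⟩
      | false =>
        simp only [Bool.false_eq_true, if_false] at h
        obtain ⟨w, hw, rfl⟩ := Finset.mem_image.mp h
        have hwD := (Finset.mem_sdiff.mp (Finset.mem_filter.mp hw).1).1
        exact ⟨Finset.mem_insert_of_mem hwD, Finset.mem_insert_self _ _⟩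
  no_loops := by
    intro e he
    rcases Finset.mem_union.mp he with h | h
    · rcases Finset.mem_union.mp h with h | h
      · rcases Finset.mem_union.mp h with h | h
        · exact D.no_loops e h
        · obtain ⟨w, hw, rfl⟩ := Finset.mem_image.mp h
          exact (Finset.mem_filter.mp hw).2
      · obtain ⟨w, hw, rfl⟩ := Finset.mem_image.mp h
        exact fun hvw => (Finset.mem_filter.mp hw).2 hvw.symm
    · cases out with
      | true =>
        simp only [if_true] at h
        obtain ⟨w, hw, rfl⟩ := Finset.mem_image.mp h
        exact fun hvw => (Finset.mem_filter.mp hw).2 hvw.symm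
      | false =>
        simp only [Bool.false_eq_true, if_false] at h
        obtain ⟨w, hw, rfl⟩ := Finset.mem_image.mp h
        exact (Finset.mem_filter.mp hw).2

/-- The recursively defined family of directed `m`-trees. -/
inductive IsDTree (m : ℕ) : Dgraph → Prop
  | base (S : Finset ℕ) (h : S.card = m) : IsDTree m (completeOn S)
  | grow (D : Dgraph) (hD : IsDTree m D) (v : ℕ) (hv : v ∉ D.verts)
      (K : Finset ℕ) (hK : K ⊆ D.verts) (hKcard : K.card = m)
      (hKcomplete : (completeOn K).IsSubdigraph D) (out : Bool) :
      IsDTree m (D.extend v K out)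

/-- `D` is a tournament: exactly one arc between any two distinct vertices. -/
def IsTournament (D : Dgraph) : Prop :=
  ∀ u ∈ D.verts, ∀ v ∈ D.verts, u ≠ v → ((u, v) ∈ D.arcs ↔ (v, u) ∉ D.arcs)

/-- `D` is acyclic: it has no directed cycle. -/
def Acyclic (D : Dgraph) : Prop :=
  ∀ v : ℕ, ¬ Relation.TransGen (fun a b => (a, b) ∈ D.arcs) v v

end Dgraph

open Dgraph

lemma reach_mono' {D E : Dgraph} (h : ∀ e ∈ D.arcs, e ∈ E.arcs) {u v : ℕ}
    (hr : D.Reach u v) : E.Reach u v :=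
  Relation.ReflTransGen.mono (fun a b hab => h (a, b) hab) u v hr

/-- Every `𝒟ₖ`-saturated digraph on `n ≥ k+1` vertices (`k ≥ 2`) has
vertex-strong connectivity exactly `k - 1`. -/
theorem stmt1 (k n : ℕ) (hk : 2 ≤ k) (hn : k + 1 ≤ n)
    (D : Dgraph) (hcard : D.verts.card = n) (hsat : D.DSaturated k) :
    (∃ S : Finset ℕ, D.IsSeparator S ∧ S.card = k - 1) ∧
      ∀ S : Finset ℕ, D.IsSeparator S → k - 1 ≤ S.card := by
  have hself : ¬ D.KStrong k := hsat.1 D ⟨subset_rfl, subset_rfl⟩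
  constructor
  · -- existence of a separator of size k-1
    rw [KStrong, not_and] at hself
    have h2 := hself (by omega)
    push_neg at h2
    obtain ⟨S₀, hS₀card, hS₀⟩ := h2
    rw [StronglyConnected] at hS₀
    push_neg at hS₀
    obtain ⟨u, hu, v, hv, huv⟩ := hS₀
    simp only [delete, Finset.mem_sdiff] at hu hv
    have hS₁sub : S₀ ∩ D.verts ⊆ D.verts \ {u, v} := by
      intro x hx
      simp only [Finset.mem_inter] at hx
      simp only [Finset.mem_sdiff, Finset.mem_insert, Finset.mem_singleton]
      refine ⟨hx.2, ?_⟩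
      rintro (rfl | rfl)
      · exact hu.2 hx.1
      · exact hv.2 hx.1
    have hc1 : (S₀ ∩ D.verts).card ≤ k - 1 := by
      have := Finset.card_le_card (Finset.inter_subset_left : S₀ ∩ D.verts ⊆ S₀)
      omega
    have hc2 : k - 1 ≤ (D.verts \ {u, v}).card := by
      have h1 := Finset.le_card_sdiff ({u, v} : Finset ℕ) D.verts
      have h2 : ({u, v} : Finset ℕ).card ≤ 2 := by
        apply (Finset.card_insert_le _ _).trans; simp
      omega
    obtain ⟨T, hST, hTsub, hTcard⟩ := Finset.exists_subsuperset_card_eq hS₁sub hc1 hc2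
    have huT : u ∉ T := by
      intro h
      have := hTsub h
      simp at this
    have hvT : v ∉ T := by
      intro h
      have := hTsub h
      simp at this
    refine ⟨T, ⟨hTsub.trans (Finset.sdiff_subset), Or.inl ?_⟩, hTcard⟩
    intro hSC
    apply huv
    have hr := hSC u (by simp [delete, hu.1, huT]) v (by simp [delete, hv.1, hvT])
    refine reach_mono' ?_ hr
    intro e he
    simp only [delete, Finset.mem_filter] at he ⊢
    have hm := D.arcs_mem e he.1
    refine ⟨he.1, fun h1 => he.2.1 (hST (Finset.mem_inter.mpr ⟨h1, hm.1⟩)),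
      fun h2 => he.2.2 (hST (Finset.mem_inter.mpr ⟨h2, hm.2⟩))⟩
  · -- lower bound
    intro S hS
    by_contra hlt
    push_neg at hlt
    have hbig : 2 ≤ (D.delete S).verts.card := by
      have h1 := Finset.le_card_sdiff S D.verts
      simp only [delete]
      omega
    obtain ⟨hSsub, hsep⟩ := hS
    rcases hsep with hnsc | hsmall
    swap
    · omega
    rw [StronglyConnected] at hnsc
    push_neg at hnsc
    obtain ⟨u, hu, v, hv, huv⟩ := hnsc
    simp only [delete, Finset.mem_sdiff] at hu hv
    have hune : u ≠ v := by rintro rfl; exact huv Relation.ReflTransGen.refl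
    have hmiss : (u, v) ∉ D.arcs := by
      intro h
      exact huv (Relation.ReflTransGen.single
        (by simp only [delete, Finset.mem_filter]; exact ⟨h, hu.2, hv.2⟩))
    obtain ⟨H, hHsub, hHk⟩ := hsat.2 u v ⟨hu.1, hv.1, hune, hmiss⟩
    have hadda : (D.addArc u v).arcs = insert (u, v) D.arcs := by
      simp [addArc, hu.1, hv.1, hune]
    have huvH : (u, v) ∈ H.arcs := by
      by_contra huvH
      refine hsat.1 H ⟨hHsub.1, ?_⟩ hHk
      intro e he
      have h := hHsub.2 he
      rw [hadda, Finset.mem_insert] at h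
      rcases h with rfl | h
      · exact absurd he huvH
      · exact h
    have huH : u ∈ H.verts := (H.arcs_mem _ huvH).1
    have hvH : v ∈ H.verts := (H.arcs_mem _ huvH).2
    set S' := S ∩ H.verts with hS'
    have hS'card : S'.card ≤ S.card := Finset.card_le_card Finset.inter_subset_left
    have hw : (H.verts \ insert u (insert v S')).Nonempty := by
      rw [← Finset.card_pos]
      have h1 := Finset.le_card_sdiff (insert u (insert v S')) H.verts
      have h2 : (insert u (insert v S')).card ≤ S'.card + 2 := by
        have h3 := Finset.card_insert_le u (insert v S')
        have h4 := Finset.card_insert_le v S'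
        omega
      have h3 := hHk.1
      omega
    obtain ⟨w, hwmem⟩ := hw
    simp only [Finset.mem_sdiff, Finset.mem_insert] at hwmem
    push_neg at hwmem
    obtain ⟨hwH, hwu, hwv, hwS'⟩ := hwmem
    have huS' : u ∉ S' := fun h => hu.2 (Finset.mem_inter.mp h).1
    have hvS' : v ∉ S' := fun h => hv.2 (Finset.mem_inter.mp h).1
    have hstrong1 := hHk.2 (insert v S')
      (by have := Finset.card_insert_le v S'; omega)
    have hstrong2 := hHk.2 (insert u S')
      (by have := Finset.card_insert_le u S'; omega)
    have hr1 : (H.delete (insert v S')).Reach u w :=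
      hstrong1 u (by simp [delete, huH, huS', hune]) w (by simp [delete, hwH, hwS', hwv])
    have hr2 : (H.delete (insert u S')).Reach w v :=
      hstrong2 w (by simp [delete, hwH, hwS', hwu]) v
        (by simp [delete, hvH, hvS', Ne.symm hune])
    have trans1 : ∀ e ∈ (H.delete (insert v S')).arcs, e ∈ (D.delete S).arcs := by
      intro e he
      simp only [delete, Finset.mem_filter, Finset.mem_insert] at he ⊢
      push_neg at he
      obtain ⟨heH, ⟨h1v, h1S⟩, ⟨h2v, h2S⟩⟩ := he
      have hmem := H.arcs_mem e heH
      have heD : e ∈ D.arcs := by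
        have h := hHsub.2 heH
        rw [hadda, Finset.mem_insert] at h
        rcases h with h | h
        · exact absurd (congrArg Prod.snd h) h2v
        · exact h
      exact ⟨heD, fun h => h1S (Finset.mem_inter.mpr ⟨h, hmem.1⟩),
        fun h => h2S (Finset.mem_inter.mpr ⟨h, hmem.2⟩)⟩
    have trans2 : ∀ e ∈ (H.delete (insert u S')).arcs, e ∈ (D.delete S).arcs := by
      intro e he
      simp only [delete, Finset.mem_filter, Finset.mem_insert] at he ⊢
      push_neg at he
      obtain ⟨heH, ⟨h1u, h1S⟩, ⟨h2u, h2S⟩⟩ := he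
      have hmem := H.arcs_mem e heH
      have heD : e ∈ D.arcs := by
        have h := hHsub.2 heH
        rw [hadda, Finset.mem_insert] at h
        rcases h with h | h
        · exact absurd (congrArg Prod.fst h) h1u
        · exact h
      exact ⟨heD, fun h => h1S (Finset.mem_inter.mpr ⟨h, hmem.1⟩),
        fun h => h2S (Finset.mem_inter.mpr ⟨h, hmem.2⟩)⟩
    exact huv (Relation.ReflTransGen.trans (reach_mono' trans1 hr1)
      (reach_mono' trans2 hr2))
end

section
/- Let k ≥ 2 and n ≥ k+1 be integers, let D be a Dₖ-saturated digraph on n vertices, let S be a minimum separator of D, and let (B₁, …, B_t) be an acyclic ordering of the strong components of D − S. Then for all 1 ≤ i < j ≤ t, every arc from a vertex of B_i to a vertex of B_j is present in D; consequently, the digraph on ⋃ V(B_i) whose arcs are exactly the arcs of D going from B_i to B_j with i < j is a t-partite tournament with parts V(B₁), …, V(B_t). -/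
open Dgraph

private lemma sc_congr {D1 D2 : Dgraph} (hv : D1.verts = D2.verts)
    (ha : D1.arcs = D2.arcs) : D1.StronglyConnected ↔ D2.StronglyConnected := by
  unfold Dgraph.StronglyConnected Dgraph.Reach
  rw [hv, ha]

/-- For a `𝒟ₖ`-saturated digraph with minimum separator `S` and an acyclic
ordering `B` of the strong components of `D - S`, all arcs from `B i` to `B j`
with `i < j` are present in `D` (and no arcs go backwards), so these arcs form
a `t`-partite tournament with parts `B 1, …, B t`. -/
theorem stmt2 (k n t : ℕ) (hk : 2 ≤ k) (hn : k + 1 ≤ n)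
    (D : Dgraph) (hcard : D.verts.card = n) (hsat : D.DSaturated k)
    (S : Finset ℕ) (hS : D.IsMinSeparator S)
    (B : Fin t → Finset ℕ)
    (hcomp : ∀ i, (D.delete S).IsStrongComponent (B i))
    (hdisj : ∀ i j, i ≠ j → Disjoint (B i) (B j))
    (hcover : (D.delete S).verts = Finset.univ.biUnion B)
    (hacyclic : ∀ i j : Fin t, i < j →
      ∀ u ∈ B j, ∀ v ∈ B i, (u, v) ∉ D.arcs) :
    ∀ i j : Fin t, i < j →
      ∀ u ∈ B i, ∀ v ∈ B j, (u, v) ∈ D.arcs ∧ (v, u) ∉ D.arcs := by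
  intro i j hij u hu v hv
  have hij' : i ≠ j := ne_of_lt hij
  have hBi : B i ⊆ (D.delete S).verts := (hcomp i).1
  have hBj : B j ⊆ (D.delete S).verts := (hcomp j).1
  have huD : u ∈ D.verts ∧ u ∉ S := by
    have := hBi hu
    simpa [Dgraph.delete, Finset.mem_sdiff] using this
  have hvD : v ∈ D.verts ∧ v ∉ S := by
    have := hBj hv
    simpa [Dgraph.delete, Finset.mem_sdiff] using this
  have huv : u ≠ v := by
    intro h; subst h
    exact (Finset.disjoint_left.mp (hdisj i j hij') hu) hv
  refine ⟨?_, hacyclic i j hij v hv u hu⟩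
  by_contra hmiss
  have huniq : ∀ w : ℕ, ∀ a b : Fin t, w ∈ B a → w ∈ B b → a = b := by
    intro w a b ha hb
    by_contra hab
    exact (Finset.disjoint_left.mp (hdisj a b hab) ha) hb
  have hidx : ∀ w ∈ (D.delete S).verts, ∃ a : Fin t, w ∈ B a := by
    intro w hw
    rw [hcover] at hw
    simpa using Finset.mem_biUnion.mp hw
  -- S has fewer than k vertices, since D itself is not k-strong
  have hSk : S.card < k := by
    have hnotK := hsat.1 D ⟨subset_rfl, subset_rfl⟩
    unfold Dgraph.KStrong at hnotK
    push_neg at hnotK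
    obtain ⟨T, hTcard, hTnot⟩ := hnotK (by rw [hcard]; exact hn)
    have hsep : D.IsSeparator (T ∩ D.verts) := by
      refine ⟨Finset.inter_subset_right, Or.inl ?_⟩
      intro hstrong
      apply hTnot
      rw [sc_congr (D1 := D.delete T) (D2 := D.delete (T ∩ D.verts)) ?_ ?_]
      · exact hstrong
      · ext x
        simp only [Dgraph.delete, Finset.mem_sdiff, Finset.mem_inter]
        tauto
      · ext e
        simp only [Dgraph.delete, Finset.mem_filter, Finset.mem_inter]
        constructor
        · rintro ⟨he, h1, h2⟩
          exact ⟨he, fun h => h1 h.1, fun h => h2 h.1⟩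
        · rintro ⟨he, h1, h2⟩
          have hm := D.arcs_mem e he
          exact ⟨he, fun h => h1 ⟨h, hm.1⟩, fun h => h2 ⟨h, hm.2⟩⟩
    calc S.card ≤ (T ∩ D.verts).card := hS.2 _ hsep
      _ ≤ T.card := Finset.card_le_card Finset.inter_subset_left
      _ < k := hTcard
  -- saturation produces a k-strong H ⊆ D + (u,v)
  obtain ⟨H, hHsub, hHk⟩ := hsat.2 u v ⟨huD.1, hvD.1, huv, hmiss⟩
  have hcond : u ∈ D.verts ∧ v ∈ D.verts ∧ u ≠ v := ⟨huD.1, hvD.1, huv⟩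
  have harcs : (D.addArc u v).arcs = insert (u, v) D.arcs := by
    simp [Dgraph.addArc, hcond]
  have hHv : H.verts ⊆ D.verts := hHsub.1
  have hHa : H.arcs ⊆ insert (u, v) D.arcs := harcs ▸ hHsub.2
  have huvH : (u, v) ∈ H.arcs := by
    by_contra h
    refine hsat.1 H ⟨hHv, ?_⟩ hHk
    intro e he
    rcases Finset.mem_insert.mp (hHa he) with rfl | he'
    · exact absurd he h
    · exact he'
  have huH : u ∈ H.verts := (H.arcs_mem _ huvH).1
  have hvH : v ∈ H.verts := (H.arcs_mem _ huvH).2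
  -- H - S is strongly connected
  have hscHS := hHk.2 S hSk
  have huHS : u ∈ (H.delete S).verts := Finset.mem_sdiff.mpr ⟨huH, huD.2⟩
  have hvHS : v ∈ (H.delete S).verts := Finset.mem_sdiff.mpr ⟨hvH, hvD.2⟩
  have hreach : (H.delete S).Reach v u := hscHS v hvHS u huHS
  -- rank is nondecreasing along any walk of H - S
  have key : ∀ w : ℕ, (H.delete S).Reach v w → ∀ a : Fin t, w ∈ B a → j ≤ a := by
    intro w hw
    induction hw with
    | refl =>
      intro a ha
      exact (huniq v a j ha hv).ge
    | @tail x w _ harc ih =>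
      have harc' := Finset.mem_filter.mp harc
      have hxS : x ∉ S := harc'.2.1
      have hwS : w ∉ S := harc'.2.2
      have hxH := H.arcs_mem _ harc'.1
      have hxDel : x ∈ (D.delete S).verts :=
        Finset.mem_sdiff.mpr ⟨hHv hxH.1, hxS⟩
      obtain ⟨ax, hax⟩ := hidx x hxDel
      have hjx : j ≤ ax := ih ax hax
      rcases Finset.mem_insert.mp (hHa harc'.1) with heq | hD
      · -- the arc is the new arc (u, v): then x = u ∈ B i, contradiction
        have hx : x = u := congrArg Prod.fst heq
        subst hx
        have : ax = i := huniq x ax i hax hu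
        exact absurd (this ▸ hjx) (not_le.mpr hij)
      · intro a ha
        have hxa : ax ≤ a := by
          by_contra hlt
          exact hacyclic a ax (not_le.mp hlt) x hax w ha hD
        exact le_trans hjx hxa
  have := key u hreach i hu
  exact absurd this (not_le.mpr hij)
end

section
/- Let k ≥ 2, n ≥ k+1, let D be a Dₖ-saturated digraph with separation (S, D₁, D₂) where |S| = k−1. If e is a missing arc of D₁ or of D₂, then every k-strongly connected subdigraph D' of D + e is contained in D₁ + e or in D₂ + e. Moreover, if e is a missing arc of D_i not between two vertices of S, then D' is contained in D_i + e. -/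
open Dgraph
/-- Given a separation `(S, D₁, D₂)` of a `𝒟ₖ`-saturated digraph `D` and a
missing arc `e = (u,v)` of `D₁` or `D₂`, every `k`-strongly connected
subdigraph of `D + e` lies in `D₁ + e` or in `D₂ + e`; moreover, if `e` is a
missing arc of `Dᵢ` not joining two vertices of `S`, it lies in `Dᵢ + e`. -/
theorem stmt3 (k n : ℕ) (hk : 2 ≤ k) (hn : k + 1 ≤ n)
    (D : Dgraph) (hcard : D.verts.card = n) (hsat : D.DSaturated k)
    (S : Finset ℕ) (hS : D.IsMinSeparator S) (hScard : S.card = k - 1)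
    (B1 : Finset ℕ) (hB1 : (D.delete S).IsStrongComponent B1)
    (hsource : ∀ u ∈ (D.delete S).verts, u ∉ B1 → ∀ v ∈ B1, (u, v) ∉ D.arcs)
    (B2 : Finset ℕ) (hB2 : B2 = (D.delete S).verts \ B1)
    (D1 D2 : Dgraph) (hD1 : D1 = D.induce (S ∪ B1)) (hD2 : D2 = D.induce (S ∪ B2))
    (u v : ℕ) (he : D1.MissingArc u v ∨ D2.MissingArc u v)
    (D' : Dgraph) (hsub : D'.IsSubdigraph (D.addArc u v)) (hks : D'.KStrong k) :
    (D'.IsSubdigraph (D1.addArc u v) ∨ D'.IsSubdigraph (D2.addArc u v)) ∧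
      (D1.MissingArc u v → ¬(u ∈ S ∧ v ∈ S) → D'.IsSubdigraph (D1.addArc u v)) ∧
      (D2.MissingArc u v → ¬(u ∈ S ∧ v ∈ S) → D'.IsSubdigraph (D2.addArc u v)) := by
  subst hD1 hD2 hB2
  -- basic facts
  have hcond : u ∈ D.verts ∧ v ∈ D.verts ∧ u ≠ v := by
    rcases he with h | h
    · exact ⟨(Finset.mem_inter.mp h.1).1, (Finset.mem_inter.mp h.2.1).1, h.2.2.1⟩
    · exact ⟨(Finset.mem_inter.mp h.1).1, (Finset.mem_inter.mp h.2.1).1, h.2.2.1⟩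
  have harcs : (D.addArc u v).arcs = insert (u, v) D.arcs := by
    simp [Dgraph.addArc, hcond.1, hcond.2.1, hcond.2.2]
  have hD'verts : D'.verts ⊆ D.verts := hsub.1
  have hD'arcs : D'.arcs ⊆ insert (u, v) D.arcs := by
    rw [← harcs]; exact hsub.2
  have hB1mem : ∀ w ∈ B1, w ∈ D.verts ∧ w ∉ S := by
    intro w hw
    have := hB1.1 hw
    simp only [Dgraph.delete, Finset.mem_sdiff] at this
    exact this
  have hB2mem : ∀ w, w ∈ (D.delete S).verts \ B1 ↔ (w ∈ D.verts ∧ w ∉ S ∧ w ∉ B1) := by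
    intro w
    simp only [Dgraph.delete, Finset.mem_sdiff]
    tauto
  -- the key lemma: D' cannot meet both B1 and B2
  have key : ∀ x ∈ D'.verts, x ∈ (D.delete S).verts \ B1 →
      ∀ y ∈ D'.verts, y ∈ B1 → False := by
    intro x hxD hxB2 y hyD hyB1
    have hsc := hks.2 S (by rw [hScard]; omega)
    have hxS : x ∉ S := ((hB2mem x).mp hxB2).2.1
    have hyS : y ∉ S := (hB1mem y hyB1).2
    have hx' : x ∈ (D'.delete S).verts := by
      simp only [Dgraph.delete, Finset.mem_sdiff]; exact ⟨hxD, hxS⟩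
    have hy' : y ∈ (D'.delete S).verts := by
      simp only [Dgraph.delete, Finset.mem_sdiff]; exact ⟨hyD, hyS⟩
    have hreach := hsc x hx' y hy'
    have inv : ∀ z, Relation.ReflTransGen
        (fun a b => (a, b) ∈ (D'.delete S).arcs) x z → z ∉ B1 := by
      intro z hz
      induction hz with
      | refl => exact ((hB2mem x).mp hxB2).2.2
      | tail _ harc ih =>
        rename_i b c _
        intro hcB1
        simp only [Dgraph.delete, Finset.mem_filter] at harc
        obtain ⟨hbc, hbS, hcS⟩ := harc
        have hbD : b ∈ D'.verts := (D'.arcs_mem _ hbc).1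
        rcases Finset.mem_insert.mp (hD'arcs hbc) with heq | hDa
        · have hb : b = u := congrArg Prod.fst heq
          have hc : c = v := congrArg Prod.snd heq
          rcases he with h | h
          · -- u ∈ D.verts ∩ (S ∪ B1), but b = u ∉ S, b ∉ B1
            have := (Finset.mem_inter.mp h.1).2
            rcases Finset.mem_union.mp this with hS' | hB1'
            · exact hbS (hb ▸ hS')
            · exact ih (hb ▸ hB1')
          · -- v ∈ D.verts ∩ (S ∪ B2), c = v ∈ B1, c ∉ S
            have := (Finset.mem_inter.mp h.2.1).2
            rcases Finset.mem_union.mp this with hS' | hB2'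
            · exact hcS (hc ▸ hS')
            · exact ((hB2mem v).mp hB2').2.2 (hc ▸ hcB1)
        · -- arc of D from b ∉ B1 into B1: contradicts hsource
          have hbDel : b ∈ (D.delete S).verts := by
            simp only [Dgraph.delete, Finset.mem_sdiff]
            exact ⟨hD'verts hbD, hbS⟩
          exact hsource b hbDel ih c hcB1 hDa
    exact inv y hreach hyB1
  -- building subdigraph inclusions
  have harcsup : ∀ (G : Dgraph) (a b : ℕ), G.arcs ⊆ (G.addArc a b).arcs := by
    intro G a b e heq
    simp only [Dgraph.addArc]
    split
    · exact Finset.mem_insert_of_mem heq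
    · exact heq
  have mk : ∀ X : Finset ℕ, (∀ w ∈ D'.verts, w ∈ X) →
      D'.IsSubdigraph ((D.induce X).addArc u v) := by
    intro X hX
    constructor
    · intro w hw
      show w ∈ (D.induce X).verts
      exact Finset.mem_inter.mpr ⟨hD'verts hw, hX w hw⟩
    · intro a ha
      rcases Finset.mem_insert.mp (hD'arcs ha) with heq | hDa
      · subst heq
        have hu : u ∈ D'.verts := (D'.arcs_mem _ ha).1
        have hv : v ∈ D'.verts := (D'.arcs_mem _ ha).2
        have hu' : u ∈ (D.induce X).verts :=
          Finset.mem_inter.mpr ⟨hcond.1, hX u hu⟩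
        have hv' : v ∈ (D.induce X).verts :=
          Finset.mem_inter.mpr ⟨hcond.2.1, hX v hv⟩
        have : ((D.induce X).addArc u v).arcs = insert (u, v) (D.induce X).arcs := by
          simp [Dgraph.addArc, hu', hv', hcond.2.2]
        rw [this]
        exact Finset.mem_insert_self _ _
      · apply harcsup
        simp only [Dgraph.induce, Finset.mem_filter]
        exact ⟨hDa, hX a.1 (D'.arcs_mem _ ha).1, hX a.2 (D'.arcs_mem _ ha).2⟩
  have noB2 : (∀ w ∈ D'.verts, w ∉ (D.delete S).verts \ B1) →
      ∀ w ∈ D'.verts, w ∈ S ∪ B1 := by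
    intro h w hw
    by_contra hc
    rw [Finset.mem_union] at hc
    push_neg at hc
    exact h w hw ((hB2mem w).mpr ⟨hD'verts hw, hc.1, hc.2⟩)
  have noB1 : (∀ w ∈ D'.verts, w ∉ B1) →
      ∀ w ∈ D'.verts, w ∈ S ∪ ((D.delete S).verts \ B1) := by
    intro h w hw
    rw [Finset.mem_union]
    by_cases hwS : w ∈ S
    · exact Or.inl hwS
    · exact Or.inr ((hB2mem w).mpr ⟨hD'verts hw, hwS, h w hw⟩)
  refine ⟨?_, ?_, ?_⟩
  · by_cases hb2 : ∃ w ∈ D'.verts, w ∈ (D.delete S).verts \ B1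
    · obtain ⟨x, hxD, hxB2⟩ := hb2
      exact Or.inr (mk _ (noB1 (fun y hy hyB1 => key x hxD hxB2 y hy hyB1)))
    · push_neg at hb2
      exact Or.inl (mk _ (noB2 hb2))
  · intro hm1 hnS
    have huvD' : (u, v) ∈ D'.arcs := by
      by_contra hnot
      exact hsat.1 D' ⟨hD'verts, fun a ha => by
        rcases Finset.mem_insert.mp (hD'arcs ha) with heq | hDa
        · exact absurd (heq ▸ ha) hnot
        · exact hDa⟩ hks
    have huD' : u ∈ D'.verts := (D'.arcs_mem _ huvD').1
    have hvD' : v ∈ D'.verts := (D'.arcs_mem _ huvD').2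
    have hw : ∃ w ∈ D'.verts, w ∈ B1 := by
      by_cases huS : u ∈ S
      · have hvS : v ∉ S := fun hvS => hnS ⟨huS, hvS⟩
        have := (Finset.mem_inter.mp hm1.2.1).2
        rcases Finset.mem_union.mp this with h | h
        · exact absurd h hvS
        · exact ⟨v, hvD', h⟩
      · have := (Finset.mem_inter.mp hm1.1).2
        rcases Finset.mem_union.mp this with h | h
        · exact absurd h huS
        · exact ⟨u, huD', h⟩
    obtain ⟨y, hyD, hyB1⟩ := hw
    exact mk _ (noB2 (fun x hx hxB2 => key x hx hxB2 y hyD hyB1))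
  · intro hm2 hnS
    have huvD' : (u, v) ∈ D'.arcs := by
      by_contra hnot
      exact hsat.1 D' ⟨hD'verts, fun a ha => by
        rcases Finset.mem_insert.mp (hD'arcs ha) with heq | hDa
        · exact absurd (heq ▸ ha) hnot
        · exact hDa⟩ hks
    have huD' : u ∈ D'.verts := (D'.arcs_mem _ huvD').1
    have hvD' : v ∈ D'.verts := (D'.arcs_mem _ huvD').2
    have hw : ∃ w ∈ D'.verts, w ∈ (D.delete S).verts \ B1 := by
      by_cases huS : u ∈ S
      · have hvS : v ∉ S := fun hvS => hnS ⟨huS, hvS⟩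
        have := (Finset.mem_inter.mp hm2.2.1).2
        rcases Finset.mem_union.mp this with h | h
        · exact absurd h hvS
        · exact ⟨v, hvD', h⟩
      · have := (Finset.mem_inter.mp hm2.1).2
        rcases Finset.mem_union.mp this with h | h
        · exact absurd h huS
        · exact ⟨u, huD', h⟩
    obtain ⟨x, hxD, hxB2⟩ := hw
    exact mk _ (noB1 (fun y hy hyB1 => key x hxD hxB2 y hy hyB1))
end

section
/- Let k ≥ 2, n ≥ k+1, and let D be a Dₖ-saturated digraph with separation (S, D₁, D₂), |S| = k−1. If D[S] is a complete digraph, then both D₁ and D₂ are Dₖ-saturated. -/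
open Dgraph
private lemma cross_lemma {r : ℕ → ℕ → Prop} {B : Finset ℕ} {b a : ℕ}
    (h : Relation.ReflTransGen r b a) (hb : b ∉ B) :
    a ∈ B → ∃ x y, r x y ∧ x ∉ B ∧ y ∈ B := by
  induction h with
  | refl => exact fun ha => absurd ha hb
  | @tail c d h1 h2 ih =>
    intro hd
    by_cases hc : c ∈ B
    · exact ih hc
    · exact ⟨c, d, h2, hc, hd⟩

private lemma key_lemma (D H : Dgraph) (k : ℕ) (S B1 : Finset ℕ)
    (hsource : ∀ u ∈ (D.delete S).verts, u ∉ B1 → ∀ v ∈ B1, (u, v) ∉ D.arcs)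
    (hScard : S.card < k)
    (u v : ℕ)
    (hnew : u ∉ (D.verts \ S) \ B1 ∨ v ∉ B1)
    (hHv : H.verts ⊆ D.verts)
    (hHa : H.arcs ⊆ insert (u, v) D.arcs)
    (hHk : H.KStrong k) :
    (∀ w ∈ H.verts, w ∈ S ∪ B1) ∨ (∀ w ∈ H.verts, w ∈ S ∪ ((D.verts \ S) \ B1)) := by
  have hdelSC : StronglyConnected (H.delete S) := hHk.2 S hScard
  by_cases hA : ∃ a ∈ (H.delete S).verts, a ∈ B1
  · left
    obtain ⟨a, haV, haB⟩ := hA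
    intro w hw
    by_contra hwX
    simp only [Finset.mem_union, not_or] at hwX
    have hwdel : w ∈ (H.delete S).verts :=
      show w ∈ H.verts \ S from Finset.mem_sdiff.mpr ⟨hw, hwX.1⟩
    have hreach := hdelSC w hwdel a haV
    obtain ⟨x, y, hxy, hxB, hyB⟩ := cross_lemma hreach hwX.2 haB
    have hxy' : (x, y) ∈ H.arcs ∧ x ∉ S ∧ y ∉ S := by
      simpa [Dgraph.delete] using hxy
    have hxD : x ∈ D.verts := hHv (H.arcs_mem _ hxy'.1).1
    rcases Finset.mem_insert.mp (hHa hxy'.1) with heq | hD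
    · have hu : u = x := congrArg Prod.fst heq.symm
      have hv : v = y := congrArg Prod.snd heq.symm
      rcases hnew with h | h
      · exact h (hu ▸ Finset.mem_sdiff.mpr ⟨Finset.mem_sdiff.mpr ⟨hxD, hxy'.2.1⟩, hxB⟩)
      · exact h (hv ▸ hyB)
    · exact hsource x
        (show x ∈ D.verts \ S from Finset.mem_sdiff.mpr ⟨hxD, hxy'.2.1⟩) hxB y hyB hD
  · right
    push_neg at hA
    intro w hw
    by_cases hwS : w ∈ S
    · exact Finset.mem_union_left _ hwS
    · have hwdel : w ∈ (H.delete S).verts :=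
        show w ∈ H.verts \ S from Finset.mem_sdiff.mpr ⟨hw, hwS⟩
      exact Finset.mem_union_right _
        (Finset.mem_sdiff.mpr ⟨Finset.mem_sdiff.mpr ⟨hHv hw, hwS⟩, hA w hwdel⟩)

/-- If `(S, D₁, D₂)` is a separation of a `𝒟ₖ`-saturated digraph `D` with
`D[S]` complete, then both `D₁` and `D₂` are `𝒟ₖ`-saturated. -/
theorem stmt4 (k n : ℕ) (hk : 2 ≤ k) (hn : k + 1 ≤ n)
    (D : Dgraph) (hcard : D.verts.card = n) (hsat : D.DSaturated k)
    (S : Finset ℕ) (hS : D.IsMinSeparator S) (hScard : S.card = k - 1)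
    (B1 : Finset ℕ) (hB1 : (D.delete S).IsStrongComponent B1)
    (hsource : ∀ u ∈ (D.delete S).verts, u ∉ B1 → ∀ v ∈ B1, (u, v) ∉ D.arcs)
    (B2 : Finset ℕ) (hB2 : B2 = (D.delete S).verts \ B1)
    (D1 D2 : Dgraph) (hD1 : D1 = D.induce (S ∪ B1)) (hD2 : D2 = D.induce (S ∪ B2))
    (hScomplete : ∀ u ∈ S, ∀ v ∈ S, u ≠ v → (u, v) ∈ D.arcs) :
    D1.DSaturated k ∧ D2.DSaturated k := by
  subst hB2 hD1 hD2
  have hSsub : S ⊆ D.verts := hS.1.1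
  have hB1v : B1 ⊆ D.verts \ S := hB1.1
  have hScardlt : S.card < k := by omega
  have part1 : ∀ X : Finset ℕ, ∀ H : Dgraph, H.IsSubdigraph (D.induce X) → ¬ H.KStrong k := by
    intro X H hH
    refine hsat.1 H ⟨hH.1.trans ?_, hH.2.trans ?_⟩
    · exact Finset.inter_subset_left
    · exact Finset.filter_subset _ _
  constructor
  · -- D1 saturated
    refine ⟨part1 _, ?_⟩
    rintro u v ⟨huV, hvV, huv, hnarc⟩
    have huD : u ∈ D.verts := (Finset.mem_inter.mp huV).1
    have hvD : v ∈ D.verts := (Finset.mem_inter.mp hvV).1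
    have huX : u ∈ S ∪ B1 := (Finset.mem_inter.mp huV).2
    have hvX : v ∈ S ∪ B1 := (Finset.mem_inter.mp hvV).2
    have hDarc : (u, v) ∉ D.arcs := fun h => hnarc (Finset.mem_filter.mpr ⟨h, huX, hvX⟩)
    obtain ⟨H, hHsub, hHk⟩ := hsat.2 u v ⟨huD, hvD, huv, hDarc⟩
    have haA : (D.addArc u v).arcs = insert (u, v) D.arcs := if_pos ⟨huD, hvD, huv⟩
    have hHa : H.arcs ⊆ insert (u, v) D.arcs := by rw [← haA]; exact hHsub.2
    have hHv : H.verts ⊆ D.verts := hHsub.1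
    have hnew : u ∉ (D.verts \ S) \ B1 ∨ v ∉ B1 := by
      left
      rcases Finset.mem_union.mp huX with h | h
      · exact fun hc => (Finset.mem_sdiff.mp (Finset.mem_sdiff.mp hc).1).2 h
      · exact fun hc => (Finset.mem_sdiff.mp hc).2 h
    rcases key_lemma D H k S B1 hsource hScardlt u v hnew hHv hHa hHk with hcase | hcase
    · refine ⟨H, ⟨?_, ?_⟩, hHk⟩
      · intro w hw
        exact Finset.mem_inter.mpr ⟨hHv hw, hcase w hw⟩
      · intro e he
        have harcs2 : ((D.induce (S ∪ B1)).addArc u v).arcs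
            = insert (u, v) (D.induce (S ∪ B1)).arcs := if_pos ⟨huV, hvV, huv⟩
        rw [harcs2]
        rcases Finset.mem_insert.mp (hHa he) with h | h
        · exact h ▸ Finset.mem_insert_self _ _
        · exact Finset.mem_insert_of_mem (Finset.mem_filter.mpr
            ⟨h, hcase e.1 (H.arcs_mem e he).1, hcase e.2 (H.arcs_mem e he).2⟩)
    · exfalso
      have hnot : (u, v) ∉ H.arcs := by
        intro hin
        rcases Finset.mem_union.mp huX with h | h
        · rcases Finset.mem_union.mp hvX with h2 | h2
          · exact hDarc (hScomplete u h v h2 huv)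
          · have hv' := hcase v (H.arcs_mem _ hin).2
            rcases Finset.mem_union.mp hv' with h3 | h3
            · exact (Finset.mem_sdiff.mp (hB1v h2)).2 h3
            · exact (Finset.mem_sdiff.mp h3).2 h2
        · have hu' := hcase u (H.arcs_mem _ hin).1
          rcases Finset.mem_union.mp hu' with h3 | h3
          · exact (Finset.mem_sdiff.mp (hB1v h)).2 h3
          · exact (Finset.mem_sdiff.mp h3).2 h
      refine hsat.1 H ⟨hHv, fun e he => ?_⟩ hHk
      rcases Finset.mem_insert.mp (hHa he) with h | h
      · exact absurd (h ▸ he) hnot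
      · exact h
  · -- D2 saturated
    refine ⟨part1 _, ?_⟩
    rintro u v ⟨huV, hvV, huv, hnarc⟩
    have huD : u ∈ D.verts := (Finset.mem_inter.mp huV).1
    have hvD : v ∈ D.verts := (Finset.mem_inter.mp hvV).1
    have huX : u ∈ S ∪ ((D.delete S).verts \ B1) := (Finset.mem_inter.mp huV).2
    have hvX : v ∈ S ∪ ((D.delete S).verts \ B1) := (Finset.mem_inter.mp hvV).2
    have hDarc : (u, v) ∉ D.arcs := fun h => hnarc (Finset.mem_filter.mpr ⟨h, huX, hvX⟩)
    obtain ⟨H, hHsub, hHk⟩ := hsat.2 u v ⟨huD, hvD, huv, hDarc⟩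
    have haA : (D.addArc u v).arcs = insert (u, v) D.arcs := if_pos ⟨huD, hvD, huv⟩
    have hHa : H.arcs ⊆ insert (u, v) D.arcs := by rw [← haA]; exact hHsub.2
    have hHv : H.verts ⊆ D.verts := hHsub.1
    have hnew : u ∉ (D.verts \ S) \ B1 ∨ v ∉ B1 := by
      right
      rcases Finset.mem_union.mp hvX with h | h
      · exact fun hc => (Finset.mem_sdiff.mp (hB1v hc)).2 h
      · exact (Finset.mem_sdiff.mp h).2
    rcases key_lemma D H k S B1 hsource hScardlt u v hnew hHv hHa hHk with hcase | hcase
    · exfalso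
      have hnot : (u, v) ∉ H.arcs := by
        intro hin
        rcases Finset.mem_union.mp huX with h | h
        · rcases Finset.mem_union.mp hvX with h2 | h2
          · exact hDarc (hScomplete u h v h2 huv)
          · have hv' := hcase v (H.arcs_mem _ hin).2
            rcases Finset.mem_union.mp hv' with h3 | h3
            · exact (Finset.mem_sdiff.mp (Finset.mem_sdiff.mp h2).1).2 h3
            · exact (Finset.mem_sdiff.mp h2).2 h3
        · have hu' := hcase u (H.arcs_mem _ hin).1
          rcases Finset.mem_union.mp hu' with h3 | h3
          · exact (Finset.mem_sdiff.mp (Finset.mem_sdiff.mp h).1).2 h3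
          · exact (Finset.mem_sdiff.mp h).2 h3
      refine hsat.1 H ⟨hHv, fun e he => ?_⟩ hHk
      rcases Finset.mem_insert.mp (hHa he) with h | h
      · exact absurd (h ▸ he) hnot
      · exact h
    · refine ⟨H, ⟨?_, ?_⟩, hHk⟩
      · intro w hw
        exact Finset.mem_inter.mpr ⟨hHv hw, hcase w hw⟩
      · intro e he
        have harcs2 : ((D.induce (S ∪ ((D.delete S).verts \ B1))).addArc u v).arcs
            = insert (u, v) (D.induce (S ∪ ((D.delete S).verts \ B1))).arcs :=
          if_pos ⟨huV, hvV, huv⟩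
        rw [harcs2]
        rcases Finset.mem_insert.mp (hHa he) with h | h
        · exact h ▸ Finset.mem_insert_self _ _
        · exact Finset.mem_insert_of_mem (Finset.mem_filter.mpr
            ⟨h, hcase e.1 (H.arcs_mem e he).1, hcase e.2 (H.arcs_mem e he).2⟩)
end

section
/- Let k ≥ 2 and n ≥ k be integers, and let D be a directed (k−1)-tree on n vertices. Then the minimum reciprocal-degree of D equals k−1, the vertex-strong connectivity of D equals k−1 (for n ≥ k+1), and every minimum separator of D induces a complete digraph on k−1 vertices. -/
open Dgraph
namespace Dgraph

lemma verts_extend (D : Dgraph) (v : ℕ) (K : Finset ℕ) (out : Bool) :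
    (D.extend v K out).verts = insert v D.verts := rfl

lemma filterK_eq {D : Dgraph} {v : ℕ} {K : Finset ℕ} (hv : v ∉ D.verts) (hK : K ⊆ D.verts) :
    (K ∩ D.verts).filter (· ≠ v) = K := by
  rw [Finset.inter_eq_left.mpr hK]
  apply Finset.filter_true_of_mem
  intro x hx hxv
  exact hv (hxv ▸ hK hx)

lemma filterR_eq {D : Dgraph} {v : ℕ} {K : Finset ℕ} (hv : v ∉ D.verts) :
    ((D.verts \ K).filter (· ≠ v)) = D.verts \ K := by
  apply Finset.filter_true_of_mem
  intro x hx hxv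
  exact hv (hxv ▸ (Finset.mem_sdiff.mp hx).1)

lemma mem_extend_arcs {D : Dgraph} {v : ℕ} {K : Finset ℕ} {out : Bool}
    (hv : v ∉ D.verts) (hK : K ⊆ D.verts) (e : ℕ × ℕ) :
    e ∈ (D.extend v K out).arcs ↔ e ∈ D.arcs ∨ (e.1 ∈ K ∧ e.2 = v) ∨ (e.1 = v ∧ e.2 ∈ K)
      ∨ (out = true ∧ e.1 = v ∧ e.2 ∈ D.verts \ K)
      ∨ (out = false ∧ e.1 ∈ D.verts \ K ∧ e.2 = v) := by
  obtain ⟨a, b⟩ := e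
  simp only [extend, filterK_eq hv hK, filterR_eq (K := K) hv, Finset.mem_union,
    Finset.mem_image, Prod.mk.injEq]
  cases out <;> simp <;> aesop

lemma arcs_subset_extend {D : Dgraph} {v : ℕ} {K : Finset ℕ} {out : Bool}
    (hv : v ∉ D.verts) (hK : K ⊆ D.verts) : D.arcs ⊆ (D.extend v K out).arcs := by
  intro e he
  exact (mem_extend_arcs hv hK e).mpr (Or.inl he)

end Dgraph
namespace Dgraph

lemma card_verts_extend {D : Dgraph} {v : ℕ} (hv : v ∉ D.verts) (K : Finset ℕ) (out : Bool) :
    (D.extend v K out).verts.card = D.verts.card + 1 := by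
  rw [verts_extend, Finset.card_insert_of_notMem hv]

lemma IsDTree.card_ge {m : ℕ} {D : Dgraph} (h : IsDTree m D) : m ≤ D.verts.card := by
  induction h with
  | base S hS => simp [completeOn, hS]
  | grow D hD v hv K hK hKcard hKc out ih =>
    rw [card_verts_extend hv]; omega

lemma IsDTree.complete_of_card_eq {m : ℕ} {D : Dgraph} (h : IsDTree m D)
    (hc : D.verts.card = m) :
    ∀ u ∈ D.verts, ∀ w ∈ D.verts, u ≠ w → (u, w) ∈ D.arcs := by
  induction h with
  | base S hS =>
    intro u hu w hw huw
    simp only [completeOn, Finset.mem_filter, Finset.mem_product] at *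
    exact ⟨⟨hu, hw⟩, huw⟩
  | grow D hD v hv K hK hKcard hKc out ih =>
    rw [card_verts_extend hv] at hc
    have := hD.card_ge
    omega

lemma strong_congr {A B : Dgraph} (hv : A.verts = B.verts) (ha : A.arcs = B.arcs) :
    A.StronglyConnected ↔ B.StronglyConnected := by
  unfold StronglyConnected Reach
  rw [hv, ha]

lemma reach_mono {A B : Dgraph} (h : A.arcs ⊆ B.arcs) {u v : ℕ} (hr : A.Reach u v) :
    B.Reach u v :=
  by
  unfold Reach at *
  induction hr with
  | refl => exact Relation.ReflTransGen.refl
  | tail _ hab ih => exact ih.tail (h hab)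

/-- Deleting fewer than `m` vertices from a directed `m`-tree leaves it strongly
connected. -/
lemma IsDTree.strong_delete {m : ℕ} {D : Dgraph} (h : IsDTree m D) :
    ∀ S : Finset ℕ, S.card < m → StronglyConnected (D.delete S) := by
  induction h with
  | base T hT =>
    intro S _ u hu w hw
    by_cases huw : u = w
    · exact huw ▸ Relation.ReflTransGen.refl
    · apply Relation.ReflTransGen.single
      simp only [delete, completeOn, Finset.mem_filter, Finset.mem_product,
        Finset.mem_sdiff] at *
      exact ⟨⟨⟨hu.1, hw.1⟩, huw⟩, hu.2, hw.2⟩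
  | grow D hD v hv K hK hKcard hKc out ih =>
    intro S hS
    have hKS : ∃ w0 ∈ K, w0 ∉ S := by
      by_contra hcon
      push_neg at hcon
      have := Finset.card_le_card hcon
      omega
    obtain ⟨w0, hw0K, hw0S⟩ := hKS
    have hw0D : w0 ∈ D.verts := hK hw0K
    have hw0v : w0 ≠ v := fun h => hv (h ▸ hw0D)
    have hsub : (D.delete S).arcs ⊆ ((D.extend v K out).delete S).arcs := by
      intro e he
      simp only [delete, Finset.mem_filter] at he ⊢
      exact ⟨arcs_subset_extend hv hK he.1, he.2⟩
    have hstep : ∀ x y, x ∈ (D.delete S).verts → y ∈ (D.delete S).verts →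
        ((D.extend v K out).delete S).Reach x y := fun x y hx hy =>
      reach_mono hsub (ih S hS x hx y hy)
    intro a ha b hb
    simp only [delete, verts_extend, Finset.mem_sdiff, Finset.mem_insert] at ha hb
    have hmemD : ∀ x, x ∈ D.verts → x ∉ S → x ∈ (D.delete S).verts := by
      intro x h1 h2; simp [delete, h1, h2]
    -- arcs between v and w0 survive the deletion if v ∉ S
    have hvw0 : v ∉ S → ((v, w0) ∈ ((D.extend v K out).delete S).arcs ∧
        (w0, v) ∈ ((D.extend v K out).delete S).arcs) := by
      intro hvS
      constructor <;>
      · simp only [delete, Finset.mem_filter]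
        refine ⟨(mem_extend_arcs hv hK _).mpr ?_, by simp [hvS, hw0S]⟩
        tauto
    rcases ha.1 with rfl | haD
    · rcases hb.1 with rfl | hbD
      · exact Relation.ReflTransGen.refl
      · exact Relation.ReflTransGen.head (hvw0 ha.2).1
          (hstep w0 b (hmemD _ hw0D hw0S) (hmemD _ hbD hb.2))
    · rcases hb.1 with rfl | hbD
      · exact Relation.ReflTransGen.tail
          (hstep a w0 (hmemD _ haD ha.2) (hmemD _ hw0D hw0S)) (hvw0 hb.2).2
      · exact hstep a b (hmemD _ haD ha.2) (hmemD _ hbD hb.2)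

end Dgraph
namespace Dgraph

/-- Every separator of a directed `m`-tree on at least `m+1` vertices has at
least `m` vertices. -/
lemma IsDTree.sep_lower {m : ℕ} {D : Dgraph} (h : IsDTree m D)
    (hc : m + 1 ≤ D.verts.card) {S : Finset ℕ} (hS : D.IsSeparator S) : m ≤ S.card := by
  by_contra hlt
  push_neg at hlt
  have hstrong := h.strong_delete S hlt
  have hcard : 2 ≤ (D.delete S).verts.card := by
    have h1 : D.verts.card ≤ (D.verts \ S).card + S.card := Finset.card_le_card_sdiff_add_card
    simp only [delete]
    omega
  rcases hS.2 with h1 | h1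
  · exact h1 hstrong
  · omega

/-- No arcs into the new vertex survive deleting `K` when `out = true`. -/
lemma extend_sep_aux {D : Dgraph} {v : ℕ} {K : Finset ℕ}
    (hv : v ∉ D.verts) (hK : K ⊆ D.verts) :
    ∀ x, (x, v) ∉ ((D.extend v K true).delete K).arcs := by
  intro x hx
  simp only [delete, Finset.mem_filter] at hx
  rcases (mem_extend_arcs hv hK _).mp hx.1 with h | h | h | h | h
  · exact hv (D.arcs_mem _ h).2
  · exact hx.2.1 h.1
  · exact hv (hK h.2)
  · exact hv (Finset.mem_sdiff.mp h.2.2).1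
  · simp at h

lemma extend_sep_aux' {D : Dgraph} {v : ℕ} {K : Finset ℕ}
    (hv : v ∉ D.verts) (hK : K ⊆ D.verts) :
    ∀ x, (v, x) ∉ ((D.extend v K false).delete K).arcs := by
  intro x hx
  simp only [delete, Finset.mem_filter] at hx
  rcases (mem_extend_arcs hv hK _).mp hx.1 with h | h | h | h | h
  · exact hv (D.arcs_mem _ h).1
  · exact hv (hK h.1)
  · exact hx.2.2 h.2
  · simp at h
  · exact hv (Finset.mem_sdiff.mp h.2.1).1

/-- In the grow step, `K` is a separator of the extension. -/
lemma extend_isSeparator {D : Dgraph} {v : ℕ} {K : Finset ℕ} {out : Bool}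
    (hv : v ∉ D.verts) (hK : K ⊆ D.verts) :
    (D.extend v K out).IsSeparator K := by
  have hvK : v ∉ K := fun h => hv (hK h)
  refine ⟨fun x hx => Finset.mem_insert_of_mem (hK hx), ?_⟩
  by_cases hrest : ∃ u ∈ D.verts, u ∉ K
  · obtain ⟨u, huD, huK⟩ := hrest
    have huv : u ≠ v := fun h => hv (h ▸ huD)
    left
    intro hstrong
    have hu : u ∈ ((D.extend v K out).delete K).verts := by
      simp [delete, verts_extend, huD, huK]
    have hvmem : v ∈ ((D.extend v K out).delete K).verts := by
      simp [delete, verts_extend, hvK]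
    cases out with
    | true =>
      have hr := hstrong u hu v hvmem
      rcases (Relation.ReflTransGen.cases_tail hr) with h | ⟨x, _, hx⟩
      · exact huv h.symm
      · exact extend_sep_aux hv hK x hx
    | false =>
      have hr := hstrong v hvmem u hu
      rcases (Relation.ReflTransGen.cases_head hr) with h | ⟨x, hx, _⟩
      · exact huv h.symm
      · exact extend_sep_aux' hv hK x hx
  · right
    push_neg at hrest
    have : (D.extend v K out).delete K = (D.extend v K out).delete K := rfl
    have hverts : ((D.extend v K out).delete K).verts = {v} := by
      simp only [delete, verts_extend]
      ext x
      simp only [Finset.mem_sdiff, Finset.mem_insert, Finset.mem_singleton]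
      constructor
      · rintro ⟨rfl | hx, hxK⟩
        · rfl
        · exact absurd (hrest x hx) hxK
      · rintro rfl; exact ⟨Or.inl rfl, hvK⟩
    rw [hverts, Finset.card_singleton]

/-- A directed `m`-tree on at least `m+1` vertices has a separator of size `m`. -/
lemma IsDTree.exists_sep {m : ℕ} {D : Dgraph} (h : IsDTree m D)
    (hc : m + 1 ≤ D.verts.card) : ∃ S : Finset ℕ, D.IsSeparator S ∧ S.card = m := by
  induction h with
  | base T hT => simp only [completeOn] at hc; omega
  | grow D hD v hv K hK hKcard hKc out ih =>
    exact ⟨K, extend_isSeparator hv hK, hKcard⟩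

end Dgraph
namespace Dgraph

/-- The reciprocal neighborhood of the new vertex is exactly `K`. -/
lemma recipDeg_extend_new {D : Dgraph} {v : ℕ} {K : Finset ℕ} {out : Bool}
    (hv : v ∉ D.verts) (hK : K ⊆ D.verts) :
    (D.extend v K out).recipDeg v = K.card := by
  unfold recipDeg
  congr 1
  ext w
  simp only [Finset.mem_filter, verts_extend, Finset.mem_insert]
  constructor
  · rintro ⟨hw, h1, h2⟩
    rcases (mem_extend_arcs hv hK _).mp h1 with h | h | h | h | h
    · exact absurd (D.arcs_mem _ h).1 hv
    · exact absurd (hK h.1) hv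
    · exact h.2
    · -- out = true, arc (v, w) with w ∈ D.verts \ K; but (w, v) must also be an arc
      exfalso
      rcases (mem_extend_arcs hv hK _).mp h2 with h' | h' | h' | h' | h'
      · exact hv (D.arcs_mem _ h').2
      · exact (Finset.mem_sdiff.mp h.2.2).2 h'.1
      · exact hv (hK h'.2)
      · exact hv (Finset.mem_sdiff.mp h'.2.2).1
      · simp [h.1] at h'
    · exact absurd (Finset.mem_sdiff.mp h.2.1).1 hv
  · intro hw
    have hwv : w ≠ v := fun h => hv (h ▸ hK hw)
    exact ⟨Or.inr (hK hw), (mem_extend_arcs hv hK _).mpr (by tauto),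
      (mem_extend_arcs hv hK _).mpr (by tauto)⟩

/-- The reciprocal degree of an old vertex does not decrease under extension. -/
lemma recipDeg_extend_old {D : Dgraph} {v : ℕ} {K : Finset ℕ} {out : Bool}
    (hv : v ∉ D.verts) (hK : K ⊆ D.verts) (w : ℕ) :
    D.recipDeg w ≤ (D.extend v K out).recipDeg w := by
  unfold recipDeg
  apply Finset.card_le_card
  intro x hx
  simp only [Finset.mem_filter, verts_extend, Finset.mem_insert] at hx ⊢
  exact ⟨Or.inr hx.1, arcs_subset_extend hv hK hx.2.1, arcs_subset_extend hv hK hx.2.2⟩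

/-- In a directed `m`-tree on `≥ m+1` vertices, every vertex has reciprocal
degree at least `m`. -/
lemma IsDTree.recipDeg_ge {m : ℕ} {D : Dgraph} (h : IsDTree m D)
    (hc : m + 1 ≤ D.verts.card) : ∀ w ∈ D.verts, m ≤ D.recipDeg w := by
  induction h with
  | base T hT => simp only [completeOn] at hc; omega
  | grow D hD v hv K hK hKcard hKc out ih =>
    intro w hw
    rw [verts_extend, Finset.mem_insert] at hw
    rcases hw with rfl | hwD
    · rw [recipDeg_extend_new hv hK, hKcard]
    · by_cases hc' : m + 1 ≤ D.verts.card
      · exact le_trans (ih hc' w hwD) (recipDeg_extend_old hv hK w)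
      · -- D.verts.card = m, so D is complete and K = D.verts
        have hDm : D.verts.card = m := by have := hD.card_ge; omega
        have hKeq : K = D.verts := Finset.eq_of_subset_of_card_le hK (by omega)
        have hcomp := hD.complete_of_card_eq hDm
        -- reciprocal neighbors of w include v and all of D.verts \ {w}
        have hsub : insert v (D.verts.erase w) ⊆
            ((D.extend v K out).verts.filter
              (fun x => (w, x) ∈ (D.extend v K out).arcs ∧ (x, w) ∈ (D.extend v K out).arcs)) := by
          intro x hx
          rcases Finset.mem_insert.mp hx with rfl | hx
          · have hwK : w ∈ K := hKeq ▸ hwD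
            refine Finset.mem_filter.mpr ⟨by simp [verts_extend], ?_, ?_⟩ <;>
              exact (mem_extend_arcs hv hK _).mpr (by tauto)
          · obtain ⟨hxw, hxD⟩ := Finset.mem_erase.mp hx
            refine Finset.mem_filter.mpr ⟨by simp [verts_extend, hxD], ?_, ?_⟩
            · exact arcs_subset_extend hv hK (hcomp w hwD x hxD (Ne.symm hxw))
            · exact arcs_subset_extend hv hK (hcomp x hxD w hwD hxw)
        have hcard2 : (insert v (D.verts.erase w)).card = m := by
          rw [Finset.card_insert_of_notMem (fun h => hv (Finset.mem_of_mem_erase h)),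
            Finset.card_erase_of_mem hwD, hDm]
          have hm1 : 1 ≤ m := hDm ▸ Finset.card_pos.mpr ⟨w, hwD⟩
          omega
        calc m = (insert v (D.verts.erase w)).card := hcard2.symm
          _ ≤ _ := Finset.card_le_card hsub
          _ = (D.extend v K out).recipDeg w := rfl

/-- A directed `m`-tree on `≥ m+1` vertices has a vertex of reciprocal degree
exactly `m`. -/
lemma IsDTree.exists_recipDeg_eq {m : ℕ} {D : Dgraph} (h : IsDTree m D)
    (hc : m + 1 ≤ D.verts.card) : ∃ w ∈ D.verts, D.recipDeg w = m := by
  induction h with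
  | base T hT => simp only [completeOn] at hc; omega
  | grow D hD v hv K hK hKcard hKc out _ =>
    exact ⟨v, by simp [verts_extend], by rw [recipDeg_extend_new hv hK, hKcard]⟩

end Dgraph
namespace Dgraph

/-- If `v ∈ S`, deleting `S` from the extension is the same as deleting
`S.erase v` from `D`. -/
lemma delete_extend_of_mem {D : Dgraph} {v : ℕ} {K : Finset ℕ} {out : Bool}
    (hv : v ∉ D.verts) (hK : K ⊆ D.verts) {S : Finset ℕ} (hvS : v ∈ S) :
    ((D.extend v K out).delete S).verts = (D.delete (S.erase v)).verts ∧
    ((D.extend v K out).delete S).arcs = (D.delete (S.erase v)).arcs := by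
  constructor
  · simp only [delete, verts_extend]
    ext x
    simp only [Finset.mem_sdiff, Finset.mem_insert, Finset.mem_erase]
    constructor
    · rintro ⟨rfl | hx, hxS⟩
      · exact absurd hvS hxS
      · exact ⟨hx, fun h => hxS h.2⟩
    · rintro ⟨hx, hxS⟩
      refine ⟨Or.inr hx, fun h => hxS ⟨fun he => hv (he ▸ hx), h⟩⟩
  · simp only [delete]
    ext e
    simp only [Finset.mem_filter, Finset.mem_erase]
    constructor
    · rintro ⟨he, h1, h2⟩
      have heD : e ∈ D.arcs := by
        rcases (mem_extend_arcs hv hK e).mp he with h | h | h | h | h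
        · exact h
        · exact absurd (h.2 ▸ hvS) h2
        · exact absurd (h.1 ▸ hvS) h1
        · exact absurd (h.2.1 ▸ hvS) h1
        · exact absurd (h.2.2 ▸ hvS) h2
      exact ⟨heD, fun h => h1 h.2, fun h => h2 h.2⟩
    · rintro ⟨he, h1, h2⟩
      have hm := D.arcs_mem e he
      refine ⟨arcs_subset_extend hv hK he, fun h => h1 ⟨fun hh => hv (hh ▸ hm.1), h⟩,
        fun h => h2 ⟨fun hh => hv (hh ▸ hm.2), h⟩⟩

/-- Every size-`m` separator of a directed `m`-tree on `≥ m+1` vertices induces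
a complete digraph. -/
lemma IsDTree.sep_clique {m : ℕ} {D : Dgraph} (h : IsDTree m D)
    (hc : m + 1 ≤ D.verts.card) {S : Finset ℕ} (hS : D.IsSeparator S)
    (hScard : S.card = m) :
    ∀ u ∈ S, ∀ w ∈ S, u ≠ w → (u, w) ∈ D.arcs := by
  induction h with
  | base T hT => simp only [completeOn] at hc; omega
  | grow D hD v hv K hK hKcard hKc out ih =>
    by_cases hc' : m + 1 ≤ D.verts.card
    case neg =>
      -- the extension is a complete digraph; any pair of vertices is adjacent
      have hDm : D.verts.card = m := by have := hD.card_ge; omega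
      have hKeq : K = D.verts := Finset.eq_of_subset_of_card_le hK (by omega)
      have hcomp := hD.complete_of_card_eq hDm
      intro a haS b hbS hab
      have haV : a ∈ (D.extend v K out).verts := hS.1 haS
      have hbV : b ∈ (D.extend v K out).verts := hS.1 hbS
      rw [verts_extend, Finset.mem_insert] at haV hbV
      apply (mem_extend_arcs hv hK (a, b)).mpr
      rcases haV with rfl | haD
      · rcases hbV with rfl | hbD
        · exact absurd rfl hab
        · exact Or.inr (Or.inr (Or.inl ⟨rfl, hKeq ▸ hbD⟩))
      · rcases hbV with rfl | hbD
        · exact Or.inr (Or.inl ⟨hKeq ▸ haD, rfl⟩)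
        · exact Or.inl (hcomp a haD b hbD hab)
    case pos =>
      by_cases hvS : v ∈ S
      · -- impossible: removing S still leaves D.delete (S.erase v) strong and big
        exfalso
        obtain ⟨hveq, haeq⟩ := delete_extend_of_mem hv hK (out := out) hvS
        have hcard' : (S.erase v).card < m := by
          have hm1 : 1 ≤ m := hScard ▸ Finset.card_pos.mpr ⟨v, hvS⟩
          rw [Finset.card_erase_of_mem hvS, hScard]
          omega
        have hstrong := hD.strong_delete (S.erase v) hcard'
        have hstrong2 : StronglyConnected ((D.extend v K out).delete S) :=
          (strong_congr hveq haeq).mpr hstrong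
        have hbig : 2 ≤ ((D.extend v K out).delete S).verts.card := by
          rw [hveq]
          have h1 : D.verts.card ≤ ((D.delete (S.erase v)).verts).card + (S.erase v).card := by
            simp only [delete]
            exact Finset.card_le_card_sdiff_add_card
          omega
        rcases hS.2 with h1 | h1
        · exact h1 hstrong2
        · omega
      · -- v ∉ S, so S ⊆ D.verts
        have hSsub : S ⊆ D.verts := by
          intro x hxS
          rcases Finset.mem_insert.mp (hS.1 hxS) with rfl | hx
          · exact absurd hxS hvS
          · exact hx
        by_cases hKsub : K ⊆ S
        · -- K = S, use completeness of K
          have hKeq : K = S := Finset.eq_of_subset_of_card_le hKsub (by omega)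
          intro a haS b hbS hab
          apply arcs_subset_extend hv hK
          apply hKc.2
          simp only [completeOn, Finset.mem_filter, Finset.mem_product]
          exact ⟨⟨hKeq ▸ haS, hKeq ▸ hbS⟩, hab⟩
        · -- S is a separator of D: apply the inductive hypothesis
          have hDsep : D.IsSeparator S := by
            refine ⟨hSsub, Or.inl ?_⟩
            intro hstrongD
            -- then the extension minus S would be strongly connected
            have hw0ex : ∃ w0 ∈ K, w0 ∉ S := by
              by_contra hcon; push_neg at hcon; exact hKsub hcon
            obtain ⟨w0, hw0K, hw0S⟩ := hw0ex
            have hw0D : w0 ∈ D.verts := hK hw0K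
            have hsub : (D.delete S).arcs ⊆ ((D.extend v K out).delete S).arcs := by
              intro e he
              simp only [delete, Finset.mem_filter] at he ⊢
              exact ⟨arcs_subset_extend hv hK he.1, he.2⟩
            have hmemD : ∀ x, x ∈ D.verts → x ∉ S → x ∈ (D.delete S).verts := by
              intro x h1 h2; simp [delete, h1, h2]
            have hvw0 : (v, w0) ∈ ((D.extend v K out).delete S).arcs ∧
                (w0, v) ∈ ((D.extend v K out).delete S).arcs := by
              constructor <;>
              · simp only [delete, Finset.mem_filter]
                refine ⟨(mem_extend_arcs hv hK _).mpr ?_, by simp [hvS, hw0S]⟩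
                tauto
            have hstrong2 : StronglyConnected ((D.extend v K out).delete S) := by
              intro a ha b hb
              simp only [delete, verts_extend, Finset.mem_sdiff, Finset.mem_insert] at ha hb
              have hstep : ∀ x y, x ∈ (D.delete S).verts → y ∈ (D.delete S).verts →
                  ((D.extend v K out).delete S).Reach x y := fun x y hx hy =>
                reach_mono hsub (hstrongD x hx y hy)
              rcases ha.1 with rfl | haD
              · rcases hb.1 with rfl | hbD
                · exact Relation.ReflTransGen.refl
                · exact Relation.ReflTransGen.head hvw0.1
                    (hstep w0 b (hmemD _ hw0D hw0S) (hmemD _ hbD hb.2))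
              · rcases hb.1 with rfl | hbD
                · exact Relation.ReflTransGen.tail
                    (hstep a w0 (hmemD _ haD ha.2) (hmemD _ hw0D hw0S)) hvw0.2
                · exact hstep a b (hmemD _ haD ha.2) (hmemD _ hbD hb.2)
            have hbig : 2 ≤ ((D.extend v K out).delete S).verts.card := by
              have h1 : (D.extend v K out).verts.card ≤
                  (((D.extend v K out).delete S).verts).card + S.card := by
                simp only [delete]
                exact Finset.card_le_card_sdiff_add_card
              have h2 := card_verts_extend hv K out
              omega
            rcases hS.2 with h1 | h1
            · exact h1 hstrong2
            · omega
          intro a haS b hbS hab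
          exact arcs_subset_extend hv hK (ih hc' hDsep a haS b hbS hab)

end Dgraph
/-- For a directed `(k-1)`-tree `D` on `n ≥ k` vertices: its minimum
reciprocal-degree is `k-1`; for `n ≥ k+1` its vertex-strong connectivity is
`k-1`; and every minimum separator is a `(k-1)`-clique. -/
theorem stmt5 (k n : ℕ) (hk : 2 ≤ k) (hn : k ≤ n)
    (D : Dgraph) (hD : Dgraph.IsDTree (k - 1) D) (hcard : D.verts.card = n) :
    ((∀ v ∈ D.verts, k - 1 ≤ D.recipDeg v) ∧ ∃ v ∈ D.verts, D.recipDeg v = k - 1) ∧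
    (k + 1 ≤ n →
      (∃ S : Finset ℕ, D.IsSeparator S ∧ S.card = k - 1) ∧
        ∀ S : Finset ℕ, D.IsSeparator S → k - 1 ≤ S.card) ∧
    (∀ S : Finset ℕ, D.IsMinSeparator S →
      S.card = k - 1 ∧ ∀ u ∈ S, ∀ v ∈ S, u ≠ v → (u, v) ∈ D.arcs) := by
  have hc1 : (k - 1) + 1 ≤ D.verts.card := by omega
  refine ⟨⟨hD.recipDeg_ge hc1, hD.exists_recipDeg_eq hc1⟩, ?_, ?_⟩
  · intro _
    exact ⟨hD.exists_sep hc1, fun S hS => hD.sep_lower hc1 hS⟩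
  · intro S hmin
    obtain ⟨T, hT, hTcard⟩ := hD.exists_sep hc1
    have hge := hD.sep_lower hc1 hmin.1
    have hle := hmin.2 T hT
    have hScard : S.card = k - 1 := by omega
    exact ⟨hScard, hD.sep_clique hc1 hmin.1 hScard⟩
end

section
/- Let k ≥ 2 and n ≥ k+1 be integers. Every directed (k−1)-tree D on n vertices contains a vertex set U with |U| ≥ 2 such that every vertex of U has reciprocal-degree exactly k−1 in D and the induced subdigraph D[U] is an acyclic tournament. -/
namespace Dgraph

variable {D : Dgraph} {v : ℕ} {K : Finset ℕ} {out : Bool}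

def OneArc (D : Dgraph) (a b : ℕ) : Prop :=
  ((a, b) ∈ D.arcs ∧ (b, a) ∉ D.arcs) ∨ ((b, a) ∈ D.arcs ∧ (a, b) ∉ D.arcs)

lemma completeOn_arc {S : Finset ℕ} {a b : ℕ} :
    (a, b) ∈ (completeOn S).arcs ↔ a ∈ S ∧ b ∈ S ∧ a ≠ b := by
  simp [completeOn, Finset.mem_filter, Finset.mem_product, and_assoc]

lemma extend_filter_eq (hv : v ∉ D.verts) (hK : K ⊆ D.verts) :
    (K ∩ D.verts).filter (· ≠ v) = K := by
  rw [Finset.inter_eq_left.mpr hK]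
  apply Finset.filter_true_of_mem
  intro w hw hwv
  exact hv (hwv ▸ hK hw)

lemma extend_sdiff_filter_eq (hv : v ∉ D.verts) :
    (D.verts \ K).filter (· ≠ v) = D.verts \ K := by
  apply Finset.filter_true_of_mem
  intro w hw hwv
  exact hv (hwv ▸ (Finset.mem_sdiff.mp hw).1)

lemma extend_arcs_eq (hv : v ∉ D.verts) (hK : K ⊆ D.verts) :
    (D.extend v K out).arcs = D.arcs ∪ K.image (fun w => (w, v))
      ∪ K.image (fun w => (v, w))
      ∪ (if out then (D.verts \ K).image (fun w => (v, w))
          else (D.verts \ K).image (fun w => (w, v))) := by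
  simp only [extend, extend_filter_eq hv hK, extend_sdiff_filter_eq hv]

lemma extend_arc_old (hv : v ∉ D.verts) (hK : K ⊆ D.verts)
    {a b : ℕ} (ha : a ∈ D.verts) (hb : b ∈ D.verts) :
    (a, b) ∈ (D.extend v K out).arcs ↔ (a, b) ∈ D.arcs := by
  have hav : a ≠ v := fun h => hv (h ▸ ha)
  have hbv : b ≠ v := fun h => hv (h ▸ hb)
  rw [extend_arcs_eq hv hK]
  cases out <;>
    simp only [if_true, Bool.false_eq_true, if_false, Finset.mem_union,
      Finset.mem_image, Prod.mk.injEq, Finset.mem_sdiff] <;> aesop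

lemma extend_arc_from_v (hv : v ∉ D.verts) (hK : K ⊆ D.verts) {w : ℕ} :
    (v, w) ∈ (D.extend v K out).arcs ↔ w ∈ K ∨ (out = true ∧ w ∈ D.verts ∧ w ∉ K) := by
  have hD : (v, w) ∉ D.arcs := fun h => hv (D.arcs_mem _ h).1
  have hKv : ∀ x ∈ K, x ≠ v := fun x hx h => hv (h ▸ hK hx)
  rw [extend_arcs_eq hv hK]
  cases out <;>
    simp only [if_true, Bool.false_eq_true, if_false, Finset.mem_union,
      Finset.mem_image, Prod.mk.injEq, Finset.mem_sdiff, hD, false_or] <;> aesop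

lemma extend_arc_to_v (hv : v ∉ D.verts) (hK : K ⊆ D.verts) {w : ℕ} :
    (w, v) ∈ (D.extend v K out).arcs ↔ w ∈ K ∨ (out = false ∧ w ∈ D.verts ∧ w ∉ K) := by
  have hD : (w, v) ∉ D.arcs := fun h => hv (D.arcs_mem _ h).2
  have hKv : ∀ x ∈ K, x ≠ v := fun x hx h => hv (h ▸ hK hx)
  rw [extend_arcs_eq hv hK]
  cases out <;>
    simp only [if_true, Bool.false_eq_true, if_false, Finset.mem_union,
      Finset.mem_image, Prod.mk.injEq, Finset.mem_sdiff, hD, false_or] <;> aesop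

lemma extend_verts : (D.extend v K out).verts = insert v D.verts := rfl

lemma recipDeg_extend_self (hv : v ∉ D.verts) (hK : K ⊆ D.verts) :
    (D.extend v K out).recipDeg v = K.card := by
  unfold recipDeg
  congr 1
  ext w
  simp only [Finset.mem_filter, extend_verts, Finset.mem_insert]
  constructor
  · rintro ⟨hw, h1, h2⟩
    rw [extend_arc_from_v hv hK] at h1
    rw [extend_arc_to_v hv hK] at h2
    rcases h1 with h1 | ⟨_, _, h1⟩
    · exact h1
    · rcases h2 with h2 | ⟨h2, _, _⟩
      · exact h2
      · simp_all
  · intro hw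
    refine ⟨Or.inr (hK hw), ?_, ?_⟩
    · rw [extend_arc_from_v hv hK]; exact Or.inl hw
    · rw [extend_arc_to_v hv hK]; exact Or.inl hw

lemma recipDeg_extend_notK (hv : v ∉ D.verts) (hK : K ⊆ D.verts)
    {u : ℕ} (hu : u ∈ D.verts) (huK : u ∉ K) :
    (D.extend v K out).recipDeg u = D.recipDeg u := by
  unfold recipDeg
  congr 1
  ext w
  simp only [Finset.mem_filter, extend_verts, Finset.mem_insert]
  constructor
  · rintro ⟨hw | hw, h1, h2⟩
    · subst hw
      rw [extend_arc_to_v hv hK] at h1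
      rw [extend_arc_from_v hv hK] at h2
      rcases h1 with h1 | ⟨h1, _, _⟩
      · exact absurd h1 huK
      · rcases h2 with h2 | ⟨h2, _, _⟩
        · exact absurd h2 huK
        · simp_all
    · rw [extend_arc_old hv hK hu hw] at h1
      rw [extend_arc_old hv hK hw hu] at h2
      exact ⟨hw, h1, h2⟩
  · rintro ⟨hw, h1, h2⟩
    exact ⟨Or.inr hw, (extend_arc_old hv hK hu hw).mpr h1,
      (extend_arc_old hv hK hw hu).mpr h2⟩

lemma recipDeg_extend_K (hv : v ∉ D.verts) (hK : K ⊆ D.verts)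
    {u : ℕ} (hu : u ∈ K) :
    (D.extend v K out).recipDeg u = D.recipDeg u + 1 := by
  have huD : u ∈ D.verts := hK hu
  unfold recipDeg
  have : (D.extend v K out).verts.filter
      (fun w => (u, w) ∈ (D.extend v K out).arcs ∧ (w, u) ∈ (D.extend v K out).arcs)
      = insert v (D.verts.filter (fun w => (u, w) ∈ D.arcs ∧ (w, u) ∈ D.arcs)) := by
    ext w
    simp only [Finset.mem_filter, extend_verts, Finset.mem_insert]
    constructor
    · rintro ⟨hw | hw, h1, h2⟩
      · exact Or.inl hw
      · rw [extend_arc_old hv hK huD hw] at h1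
        rw [extend_arc_old hv hK hw huD] at h2
        exact Or.inr ⟨hw, h1, h2⟩
    · rintro (rfl | ⟨hw, h1, h2⟩)
      · refine ⟨Or.inl rfl, ?_, ?_⟩
        · rw [extend_arc_to_v hv hK]; exact Or.inl hu
        · rw [extend_arc_from_v hv hK]; exact Or.inl hu
      · exact ⟨Or.inr hw, (extend_arc_old hv hK huD hw).mpr h1,
          (extend_arc_old hv hK hw huD).mpr h2⟩
  rw [this, Finset.card_insert_of_notMem]
  intro h
  exact hv (Finset.mem_filter.mp h).1

lemma recipDeg_completeOn {S : Finset ℕ} {u : ℕ} (hu : u ∈ S) :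
    (completeOn S).recipDeg u = S.card - 1 := by
  unfold recipDeg
  have : (completeOn S).verts.filter
      (fun w => (u, w) ∈ (completeOn S).arcs ∧ (w, u) ∈ (completeOn S).arcs)
      = S.erase u := by
    ext w
    simp only [Finset.mem_filter, Finset.mem_erase, completeOn_arc]
    constructor
    · rintro ⟨hw, ⟨_, _, h⟩, _⟩; exact ⟨fun e => h e.symm, hw⟩
    · rintro ⟨hne, hw⟩
      exact ⟨hw, ⟨hu, hw, fun e => hne e.symm⟩, ⟨hw, hu, hne⟩⟩
  rw [this, Finset.card_erase_of_mem hu]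

lemma dtree_card_ge {m : ℕ} {D : Dgraph} (hD : IsDTree m D) : m ≤ D.verts.card := by
  induction hD with
  | base S h => simpa [completeOn] using h.ge
  | grow D hD v hv K hK hKcard hKcomp out ih =>
    rw [extend_verts, Finset.card_insert_of_notMem hv]
    omega

lemma allDeg {m : ℕ} (hm : 1 ≤ m) {D : Dgraph} (hD : IsDTree m D)
    (hcard : D.verts.card = m + 1) : ∀ u ∈ D.verts, D.recipDeg u = m := by
  cases hD with
  | base S h => simp only [completeOn] at hcard; omega
  | grow D hD v hv K hK hKcard hKcomp out =>
    rw [extend_verts, Finset.card_insert_of_notMem hv] at hcard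
    have hDcard : D.verts.card = m := by omega
    cases hD with
    | grow D' hD' v' hv' K' hK' hKcard' hKcomp' out' =>
      have := dtree_card_ge hD'
      rw [extend_verts, Finset.card_insert_of_notMem hv'] at hDcard
      omega
    | base S h =>
      have hSverts : (completeOn S).verts = S := rfl
      have hKS : K = S := by
        apply Finset.eq_of_subset_of_card_le (hSverts ▸ hK)
        rw [h, hKcard]
      intro u hu
      rw [extend_verts, Finset.mem_insert] at hu
      rcases hu with rfl | hu
      · rw [recipDeg_extend_self hv hK, hKcard]
      · rw [hSverts] at hu
        rw [recipDeg_extend_K hv hK (hKS ▸ hu), recipDeg_completeOn hu, h]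
        omega

lemma oneArc_extend (hv : v ∉ D.verts) (hK : K ⊆ D.verts)
    {w : ℕ} (hw : w ∈ D.verts) (hwK : w ∉ K) :
    OneArc (D.extend v K out) v w := by
  cases out with
  | true =>
    left
    refine ⟨(extend_arc_from_v hv hK).mpr (Or.inr ⟨rfl, hw, hwK⟩), fun h => ?_⟩
    rcases (extend_arc_to_v hv hK).mp h with h | ⟨h, _, _⟩
    · exact hwK h
    · simp at h
  | false =>
    right
    refine ⟨(extend_arc_to_v hv hK).mpr (Or.inr ⟨rfl, hw, hwK⟩), fun h => ?_⟩
    rcases (extend_arc_from_v hv hK).mp h with h | ⟨h, _, _⟩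
    · exact hwK h
    · simp at h

lemma key {m : ℕ} (hm : 1 ≤ m) {D : Dgraph} (hD : IsDTree m D)
    (hcard : m + 2 ≤ D.verts.card) :
    ∃ u w, u ∈ D.verts ∧ w ∈ D.verts ∧ u ≠ w ∧
      D.recipDeg u = m ∧ D.recipDeg w = m ∧ OneArc D u w := by
  induction hD with
  | base S h =>
    have : (completeOn S).verts = S := rfl
    rw [this, h] at hcard; omega
  | grow D hD v hv K hK hKcard hKcomp out ih =>
    rw [extend_verts, Finset.card_insert_of_notMem hv] at hcard
    -- pick x ∈ D.verts, x ∉ K, recipDeg D x = m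
    have hKD : K.card < D.verts.card := by
      have := dtree_card_ge hD; omega
    obtain ⟨x, hxD, hxK, hxdeg⟩ : ∃ x, x ∈ D.verts ∧ x ∉ K ∧ D.recipDeg x = m := by
      rcases eq_or_lt_of_le (show m + 1 ≤ D.verts.card by omega) with hEq | hLt
      · -- card = m + 1 : all degrees m, pick any x outside K
        obtain ⟨x, hx⟩ : (D.verts \ K).Nonempty := by
          rw [← Finset.card_pos, Finset.card_sdiff_of_subset hK]; omega
        rw [Finset.mem_sdiff] at hx
        exact ⟨x, hx.1, hx.2, allDeg hm hD hEq.symm x hx.1⟩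
      · obtain ⟨u, w, hu, hw, hne, hdu, hdw, hone⟩ := ih (by omega)
        have hnotboth : ¬(u ∈ K ∧ w ∈ K) := by
          rintro ⟨h1, h2⟩
          have a1 : (u, w) ∈ D.arcs := hKcomp.2 (completeOn_arc.mpr ⟨h1, h2, hne⟩)
          have a2 : (w, u) ∈ D.arcs := hKcomp.2 (completeOn_arc.mpr ⟨h2, h1, hne.symm⟩)
          rcases hone with ⟨_, h⟩ | ⟨_, h⟩ <;> [exact h a2; exact h a1]
        by_cases huK : u ∈ K
        · exact ⟨w, hw, fun h => hnotboth ⟨huK, h⟩, hdw⟩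
        · exact ⟨u, hu, huK, hdu⟩
    refine ⟨v, x, Finset.mem_insert_self _ _,
      Finset.mem_insert_of_mem hxD, fun h => hv (h ▸ hxD), ?_, ?_, ?_⟩
    · rw [recipDeg_extend_self hv hK, hKcard]
    · rw [recipDeg_extend_notK hv hK hxD hxK, hxdeg]
    · exact oneArc_extend hv hK hxD hxK

lemma pair_good {D : Dgraph} {u w : ℕ} (hu : u ∈ D.verts) (hw : w ∈ D.verts)
    (hne : u ≠ w) (h1 : (u, w) ∈ D.arcs) (h2 : (w, u) ∉ D.arcs) :
    (D.induce {u, w}).IsTournament ∧ (D.induce {u, w}).Acyclic := by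
  have harcs : ∀ e ∈ (D.induce ({u, w} : Finset ℕ)).arcs, e = (u, w) := by
    rintro ⟨a, b⟩ he
    simp only [induce, Finset.mem_filter, Finset.mem_insert, Finset.mem_singleton] at he
    obtain ⟨heD, ha, hb⟩ := he
    have hab : a ≠ b := D.no_loops _ heD
    rcases ha with rfl | rfl <;> rcases hb with rfl | rfl
    · exact absurd rfl hab
    · rfl
    · exact absurd heD h2
    · exact absurd rfl hab
  constructor
  · intro a ha b hb hab
    simp only [induce, Finset.mem_inter, Finset.mem_insert, Finset.mem_singleton] at ha hb
    have memarc : ∀ c d : ℕ, (c, d) ∈ (D.induce ({u, w} : Finset ℕ)).arcs ↔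
        (c, d) ∈ D.arcs ∧ (c = u ∨ c = w) ∧ (d = u ∨ d = w) := by
      intro c d
      simp [induce, Finset.mem_filter]
    rcases ha.2 with rfl | rfl <;> rcases hb.2 with rfl | rfl
    · exact absurd rfl hab
    · rw [memarc, memarc]
      simp [h1, h2, hne]
    · rw [memarc, memarc]
      simp [h1, h2, hne.symm]
    · exact absurd rfl hab
  · intro x hx
    have aux : ∀ a b, Relation.TransGen
        (fun a b => (a, b) ∈ (D.induce ({u, w} : Finset ℕ)).arcs) a b →
        a = u ∧ b = w := by
      intro a b h
      induction h with
      | single h =>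
        have := harcs _ h
        exact ⟨congrArg Prod.fst this, congrArg Prod.snd this⟩
      | tail _ h ih =>
        have h' := harcs _ h
        have : _ = u := congrArg Prod.fst h'
        simp only at this
        rw [ih.2] at this
        exact absurd this.symm hne
    exact hne ((aux x x hx).1.symm.trans (aux x x hx).2)

end Dgraph

open Dgraph
/-- Every directed `(k-1)`-tree on `n ≥ k+1` vertices contains a set `U` of at
least two vertices, each of reciprocal-degree exactly `k-1`, inducing an
acyclic tournament. -/
theorem stmt6 (k n : ℕ) (hk : 2 ≤ k) (hn : k + 1 ≤ n)
    (D : Dgraph) (hD : Dgraph.IsDTree (k - 1) D) (hcard : D.verts.card = n) :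
    ∃ U : Finset ℕ, U ⊆ D.verts ∧ 2 ≤ U.card ∧
      (∀ u ∈ U, D.recipDeg u = k - 1) ∧
      (D.induce U).IsTournament ∧ (D.induce U).Acyclic := by
  have hm : 1 ≤ k - 1 := by omega
  have hcard' : (k - 1) + 2 ≤ D.verts.card := by omega
  obtain ⟨u, w, hu, hw, hne, hdu, hdw, hone⟩ := key hm hD hcard'
  have hTA : (D.induce {u, w}).IsTournament ∧ (D.induce {u, w}).Acyclic := by
    rcases hone with ⟨h1, h2⟩ | ⟨h1, h2⟩
    · exact pair_good hu hw hne h1 h2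
    · rw [Finset.pair_comm]
      exact pair_good hw hu hne.symm h1 h2
  refine ⟨{u, w}, ?_, ?_, ?_, hTA.1, hTA.2⟩
  · intro x hx
    rcases Finset.mem_insert.mp hx with rfl | hx
    · exact hu
    · rw [Finset.mem_singleton] at hx
      exact hx ▸ hw
  · rw [Finset.card_pair hne]
  · intro x hx
    rcases Finset.mem_insert.mp hx with rfl | hx
    · exact hdu
    · rw [Finset.mem_singleton] at hx
      exact hx ▸ hdw
end
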